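/- arXiv:2009.02496 — 3 statements merged into one kernel-verified Lean document; each statement's English description precedes it below -/
import Mathlib

section
/- Fix an integer N > 6 and define K : (0, +∞) → ℝ by K(s) = 2π − N·arccos(cosh(s)/(2·cosh(s) − 1)). Then K is strictly decreasing, lim_{s→0⁺} K(s) = 2π, lim_{s→+∞} K(s) = (π/3)(6 − N) < 0, and consequently there exists a unique s* > 0 with K(s*) = 0. -/
/-!
The dihedral angle `θ(s) = arccos (cosh s / (2 cosh s - 1))` is continuous, vanishes at `s = 0`,
increases strictly for `s ≥ 0` (because `x ↦ x / (2x - 1)` decreases on `x > 1/2` and `cosh`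
increases on `s ≥ 0`), and tends to `arccos (1/2) = π/3` as `s → ∞`. Hence `K = 2π - N θ` is
continuous and strictly decreasing from `2π` to `2π - Nπ/3 < 0`, and the intermediate value
theorem together with injectivity gives the unique zero.
-/

open Real Filter Set Topology

lemma tendsto_cosh_atTop : Tendsto cosh atTop atTop := by
  refine tendsto_atTop_mono (fun x => ?_) (tendsto_exp_atTop.atTop_div_const two_pos)
  rw [cosh_eq]
  linarith [exp_pos (-x)]

lemma tendsto_div_two_mul_sub_one_atTop :
    Tendsto (fun x : ℝ => x / (2 * x - 1)) atTop (𝓝 (1 / 2)) := by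
  have h : Tendsto (fun x : ℝ => (2 - x⁻¹)⁻¹) atTop (𝓝 (2 - 0)⁻¹) :=
    ((tendsto_const_nhds.sub tendsto_inv_atTop_zero).inv₀ (by norm_num))
  rw [sub_zero, ← one_div] at h
  refine h.congr' ?_
  filter_upwards [eventually_gt_atTop 0] with x hx
  field_simp

lemma strictAntiOn_div_two_mul_sub_one :
    StrictAntiOn (fun x : ℝ => x / (2 * x - 1)) (Ioi (1 / 2)) := by
  intro a (ha : 1 / 2 < a) b (hb : 1 / 2 < b) hab
  rw [div_lt_div_iff₀ (by linarith) (by linarith)]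
  linarith

noncomputable def regularDihedralAngle (s : ℝ) : ℝ :=
  arccos (cosh s / (2 * cosh s - 1))

lemma one_lt_two_mul_cosh (s : ℝ) : 1 < 2 * cosh s := by
  linarith [one_le_cosh s]

lemma cosh_div_two_mul_cosh_sub_one_mem_Icc (s : ℝ) :
    cosh s / (2 * cosh s - 1) ∈ Icc (-1) 1 := by
  have hd : 0 < 2 * cosh s - 1 := by linarith [one_lt_two_mul_cosh s]
  refine ⟨le_trans (by norm_num) (div_pos (cosh_pos s) hd).le, ?_⟩
  rw [div_le_one hd]
  linarith [one_le_cosh s]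

@[fun_prop]
lemma continuous_regularDihedralAngle : Continuous regularDihedralAngle :=
  continuous_arccos.comp <| continuous_cosh.div
    ((continuous_const.mul continuous_cosh).sub continuous_const)
    fun s => by linarith [one_lt_two_mul_cosh s]

lemma regularDihedralAngle_zero : regularDihedralAngle 0 = 0 := by
  norm_num [regularDihedralAngle]

lemma strictMonoOn_regularDihedralAngle : StrictMonoOn regularDihedralAngle (Ici 0) := by
  intro a ha b hb hab
  have hhalf (s : ℝ) : cosh s ∈ Ioi (1 / 2 : ℝ) := by
    show 1 / 2 < cosh s; linarith [one_lt_two_mul_cosh s]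
  exact strictAntiOn_arccos (cosh_div_two_mul_cosh_sub_one_mem_Icc b)
    (cosh_div_two_mul_cosh_sub_one_mem_Icc a)
    (strictAntiOn_div_two_mul_sub_one (hhalf a) (hhalf b) (cosh_strictMonoOn ha hb hab))

lemma tendsto_regularDihedralAngle_atTop :
    Tendsto regularDihedralAngle atTop (𝓝 (π / 3)) := by
  have harccos : arccos (1 / 2) = π / 3 := by
    rw [← cos_pi_div_three, arccos_cos (by positivity) (by linarith [pi_pos])]
  rw [← harccos]
  exact (continuous_arccos.tendsto _).comp
    (tendsto_div_two_mul_sub_one_atTop.comp tendsto_cosh_atTop)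

lemma existsUnique_eq_zero_of_injOn_of_tendsto {f : ℝ → ℝ} {a l₀ l₁ : ℝ}
    (hf : ContinuousOn f (Ioi a)) (hinj : InjOn f (Ioi a))
    (h₀ : Tendsto f (𝓝[>] a) (𝓝 l₀)) (hl₀ : 0 < l₀)
    (h₁ : Tendsto f atTop (𝓝 l₁)) (hl₁ : l₁ < 0) :
    ∃! s, s ∈ Ioi a ∧ f s = 0 := by
  obtain ⟨b, hfb, hb⟩ := ((h₀.eventually_const_lt hl₀).and self_mem_nhdsWithin).exists
  obtain ⟨c, hfc, hbc⟩ := ((h₁.eventually_lt_const hl₁).and (eventually_gt_atTop b)).exists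
  obtain ⟨s, hs, hfs⟩ := intermediate_value_Icc' hbc.le
    (hf.mono fun x hx => lt_of_lt_of_le hb hx.1) ⟨hfc.le, hfb.le⟩
  have has : s ∈ Ioi a := lt_of_lt_of_le hb hs.1
  exact ⟨s, ⟨has, hfs⟩, fun y ⟨hay, hfy⟩ => hinj hay has (hfy.trans hfs.symm)⟩

theorem stmt_2 (N : ℤ) (hN : 6 < N)
    (K : ℝ → ℝ)
    (hK : ∀ s : ℝ, K s = 2 * Real.pi -
      (N : ℝ) * Real.arccos (Real.cosh s / (2 * Real.cosh s - 1))) :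
    StrictAntiOn K (Set.Ioi 0) ∧
    Filter.Tendsto K (nhdsWithin 0 (Set.Ioi 0)) (nhds (2 * Real.pi)) ∧
    Filter.Tendsto K Filter.atTop (nhds (Real.pi / 3 * (6 - (N : ℝ)))) ∧
    Real.pi / 3 * (6 - (N : ℝ)) < 0 ∧
    (∃! s : ℝ, s ∈ Set.Ioi (0 : ℝ) ∧ K s = 0) := by
  obtain rfl : K = fun s => 2 * π - N * regularDihedralAngle s := funext hK
  have hN' : (6 : ℝ) < N := by exact_mod_cast hN
  have hcont : Continuous fun s => 2 * π - N * regularDihedralAngle s := by fun_prop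
  have hanti : StrictAntiOn (fun s => 2 * π - N * regularDihedralAngle s) (Ioi 0) :=
    fun a ha b hb hab => sub_lt_sub_left (mul_lt_mul_of_pos_left
      (strictMonoOn_regularDihedralAngle (Ioi_subset_Ici_self ha) (Ioi_subset_Ici_self hb) hab)
      (by linarith)) _
  have hlim₀ : Tendsto (fun s => 2 * π - N * regularDihedralAngle s) (𝓝[>] 0) (𝓝 (2 * π)) := by
    simpa [regularDihedralAngle_zero] using (hcont.tendsto 0).mono_left nhdsWithin_le_nhds
  have hlim₁ : Tendsto (fun s => 2 * π - N * regularDihedralAngle s) atTop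
      (𝓝 (π / 3 * (6 - N))) := by
    convert tendsto_const_nhds.sub (tendsto_regularDihedralAngle_atTop.const_mul (N : ℝ))
      using 2
    ring
  have hneg : π / 3 * (6 - N) < 0 := mul_neg_of_pos_of_neg (by positivity) (by linarith)
  exact ⟨hanti, hlim₀, hlim₁, hneg, existsUnique_eq_zero_of_injOn_of_tendsto
    hcont.continuousOn hanti.injOn hlim₀ (by positivity) hlim₁ hneg⟩
end

section
/- Let H : ℝⁿ → ℝ be C¹ and convex, and suppose H is C² and strictly convex (positive definite Hessian) in a neighborhood of some point x₀ with ∇H(x₀) = 0. If x* ∈ ℝⁿ satisfies ∇H(x*) = 0, then x* = x₀. -/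
/-! A convex function whose derivative vanishes at a point is minimal there (restrict it to a
line and compare the derivative with a secant slope), so `x₀` and `x'` are both global minima.
The minimizers of a convex function form a convex set, hence contain points of the segment
`[x₀, x']` arbitrarily close to `x₀`; but a function that is strictly convex near `x₀` has at most
one minimizer there. -/

open Set Filter Topology AffineMap

theorem ConvexOn.isMinOn_of_hasFDerivAt_zero {E : Type*} [NormedAddCommGroup E] [NormedSpace ℝ E]
    {f : E → ℝ} {s : Set E} {x : E} (hf : ConvexOn ℝ s f) (hx : x ∈ s)
    (hfx : HasFDerivAt f (0 : E →L[ℝ] ℝ) x) : IsMinOn f s x := by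
  intro y hy
  have hline : ConvexOn ℝ (lineMap x y ⁻¹' s) (f ∘ lineMap (k := ℝ) x y) :=
    hf.comp_affineMap (lineMap x y)
  have hderiv : HasDerivAt (f ∘ lineMap (k := ℝ) x y) 0 0 := by
    simpa using (lineMap_apply_zero (k := ℝ) x y ▸ hfx).comp_hasDerivAt (0 : ℝ) hasDerivAt_lineMap
  simpa [slope_def_field] using
    hline.le_slope_of_hasDerivAt (by simpa using hx) (by simpa using hy) one_pos hderiv

theorem ConvexOn.isMinOn_of_gradient_eq_zero {F : Type*} [NormedAddCommGroup F]
    [InnerProductSpace ℝ F] [CompleteSpace F] {f : F → ℝ} {s : Set F} {x : F}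
    (hf : ConvexOn ℝ s f) (hx : x ∈ s) (hfx : DifferentiableAt ℝ f x) (hgrad : gradient f x = 0) :
    IsMinOn f s x := by
  have hderiv := hfx.hasGradientAt.hasFDerivAt
  rw [hgrad, map_zero] at hderiv
  exact hf.isMinOn_of_hasFDerivAt_zero hx hderiv

theorem ConvexOn.eq_of_isMinOn_of_strictConvexOn_nhds {E : Type*} [AddCommGroup E] [Module ℝ E]
    [TopologicalSpace E] [IsTopologicalAddGroup E] [ContinuousSMul ℝ E]
    {f : E → ℝ} {s t : Set E} {x y : E} (hf : ConvexOn ℝ s f) (hx : x ∈ s) (hy : y ∈ s)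
    (hxmin : IsMinOn f s x) (hymin : IsMinOn f s y) (ht : t ∈ 𝓝 x) (hft : StrictConvexOn ℝ t f) :
    y = x := by
  have hnear : ∀ᶠ c in 𝓝[>] (0 : ℝ), c < 1 ∧ lineMap x y c ∈ t :=
    (Filter.Eventually.and (Ioo_mem_nhdsGT one_pos)
      (nhdsWithin_le_nhds (lineMap_continuous.tendsto' (0 : ℝ) x (lineMap_apply_zero x y) ht))).mono
      fun c h => ⟨h.1.2, h.2⟩
  obtain ⟨c, ⟨hc1, hct⟩, hc0⟩ := (hnear.and self_mem_nhdsWithin).exists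
  have hfxy : f y = f x := le_antisymm (hymin hx) (hxmin hy)
  have hz : IsMinOn f (s ∩ t) (lineMap x y c) := by
    intro w hw
    calc f (lineMap x y c) ≤ (1 - c) • f x + c • f y := by
          rw [lineMap_apply_module]
          exact hf.2 hx hy (by linarith) hc0.le (by ring)
      _ = f x := by rw [hfxy, smul_eq_mul, smul_eq_mul]; ring
      _ ≤ f w := hxmin hw.1
  have hft' : StrictConvexOn ℝ (s ∩ t) f := hft.subset inter_subset_right (hf.1.inter hft.1)
  have hzx := hft'.eq_of_isMinOn hz (hxmin.on_subset inter_subset_left)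
    ⟨hf.1.lineMap_mem hx hy ⟨hc0.le, hc1.le⟩, hct⟩ ⟨hx, mem_of_mem_nhds ht⟩
  exact ((lineMap_eq_left_iff.mp hzx).resolve_right hc0.ne').symm

theorem stmt_7 (n : ℕ) (H : EuclideanSpace ℝ (Fin n) → ℝ)
    (hH : ContDiff ℝ 1 H) (hconv : ConvexOn ℝ Set.univ H)
    (x₀ : EuclideanSpace ℝ (Fin n))
    (hloc : ∃ ε > 0, ContDiffOn ℝ 2 H (Metric.ball x₀ ε) ∧
      StrictConvexOn ℝ (Metric.ball x₀ ε) H)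
    (hx₀ : gradient H x₀ = 0)
    (x' : EuclideanSpace ℝ (Fin n)) (hx' : gradient H x' = 0) :
    x' = x₀ := by
  obtain ⟨ε, hε, -, hstrict⟩ := hloc
  have hdiff := hH.differentiable one_ne_zero
  exact hconv.eq_of_isMinOn_of_strictConvexOn_nhds (mem_univ _) (mem_univ _)
    (hconv.isMinOn_of_gradient_eq_zero (mem_univ _) (hdiff x₀) hx₀)
    (hconv.isMinOn_of_gradient_eq_zero (mem_univ _) (hdiff x') hx')
    (Metric.ball_mem_nhds x₀ hε) hstrict
end

section
/- Let f : ℝⁿ → ℝ be a C¹ convex function with ∇f(x₀) = 0 for some x₀ ∈ ℝⁿ, and suppose f is C² and strictly convex in a neighborhood of x₀. Then f is proper: f(x) → +∞ as ‖x‖ → +∞. -/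
/-!
At a critical point `x₀` the convex function `f` attains its global minimum, and strict convexity
near `x₀` makes `f` strictly larger than `f x₀` on a small sphere `‖y - x₀‖ = r`, hence at least
`f x₀ + δ` there for some `δ > 0` by compactness. Convexity along the ray from `x₀` through `x`
then forces `f x ≥ f x₀ + (δ / r) ‖x - x₀‖` once `‖x - x₀‖ ≥ r`.
-/

open Filter Set Metric

section Convex

variable {E : Type*} [NormedAddCommGroup E] [NormedSpace ℝ E] {f : E → ℝ} {s : Set E} {x₀ : E}

lemma ConvexOn.isMinOn_of_hasFDerivAt_eq_zero (hconv : ConvexOn ℝ s f) (hx₀ : x₀ ∈ s)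
    (hf : HasFDerivAt f (0 : E →L[ℝ] ℝ) x₀) : IsMinOn f s x₀ := by
  intro y hy
  let g : ℝ → ℝ := f ∘ AffineMap.lineMap x₀ y
  have hg : ConvexOn ℝ (AffineMap.lineMap x₀ y ⁻¹' s) g := hconv.comp_affineMap _
  have hg' : HasDerivAt g 0 0 := by
    have hline : HasDerivAt (AffineMap.lineMap x₀ y : ℝ → E) (y - x₀) 0 :=
      AffineMap.hasDerivAt_lineMap
    have hf' : HasFDerivAt f (0 : E →L[ℝ] ℝ) (AffineMap.lineMap x₀ y (0 : ℝ)) := by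
      rwa [AffineMap.lineMap_apply_zero]
    simpa using hf'.comp_hasDerivAt 0 hline
  have hslope := hg.le_slope_of_hasDerivAt (by simpa using hx₀) (by simpa using hy) one_pos hg'
  simpa [g, slope] using hslope

lemma StrictConvexOn.lt_of_isMinOn {y : E} (hsc : StrictConvexOn ℝ s f) (hmin : IsMinOn f s x₀)
    (hx₀ : x₀ ∈ s) (hy : y ∈ s) (hne : y ≠ x₀) : f x₀ < f y := by
  by_contra! hle
  exact hne (hsc.eq_of_isMinOn (fun z hz => hle.trans (hmin hz)) hmin hy hx₀)

lemma ConvexOn.add_div_mul_dist_le (hconv : ConvexOn ℝ univ f) {r m : ℝ} (hr : 0 < r)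
    (hm : ∀ y ∈ sphere x₀ r, m ≤ f y) {x : E} (hx : r ≤ dist x x₀) :
    f x₀ + (m - f x₀) / r * dist x x₀ ≤ f x := by
  rw [dist_eq_norm] at hx ⊢
  have hd : 0 < ‖x - x₀‖ := hr.trans_le hx
  set t := r / ‖x - x₀‖ with ht
  have ht0 : 0 < t := div_pos hr hd
  have ht1 : t ≤ 1 := (div_le_one hd).mpr hx
  have hsphere : (1 - t) • x₀ + t • x ∈ sphere x₀ r := by
    rw [mem_sphere, dist_eq_norm, show (1 - t) • x₀ + t • x - x₀ = t • (x - x₀) by module,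
      norm_smul, Real.norm_of_nonneg ht0.le, ht, div_mul_cancel₀ _ hd.ne']
  have hseg : f ((1 - t) • x₀ + t • x) ≤ (1 - t) * f x₀ + t * f x :=
    hconv.2 (mem_univ _) (mem_univ _) (by linarith) ht0.le (by ring)
  have hmt : m - f x₀ ≤ t * (f x - f x₀) := by linarith [hm _ hsphere]
  have hcoef : (m - f x₀) / r * ‖x - x₀‖ = (m - f x₀) / t := by
    rw [ht]; field_simp
  rw [hcoef]
  linarith [(div_le_iff₀' ht0).mpr hmt]

theorem ConvexOn.tendsto_cocompact_atTop_of_forall_sphere_lt [FiniteDimensional ℝ E]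
    (hconv : ConvexOn ℝ univ f) {r : ℝ} (hr : 0 < r) (hsphere : ∀ y ∈ sphere x₀ r, f x₀ < f y) :
    Tendsto f (cocompact E) atTop := by
  obtain ⟨m, hm, hmf⟩ := (isCompact_sphere x₀ r).exists_forall_le'
    hconv.locallyLipschitz.continuous.continuousOn hsphere
  have hlin : Tendsto (fun x => f x₀ + (m - f x₀) / r * dist x x₀) (cocompact E) atTop :=
    tendsto_atTop_add_const_left _ _
      ((tendsto_dist_right_cocompact_atTop x₀).const_mul_atTop (by positivity))
  refine tendsto_atTop_mono' _ ?_ hlin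
  have hfar : (closedBall x₀ r)ᶜ ∈ cocompact E :=
    (isCompact_closedBall x₀ r).compl_mem_cocompact
  filter_upwards [hfar] with x hx
  rw [mem_compl_iff, mem_closedBall, not_le] at hx
  exact hconv.add_div_mul_dist_le hr hmf hx.le

end Convex

theorem stmt_8 (n : ℕ) (f : EuclideanSpace ℝ (Fin n) → ℝ)
    (hf : ContDiff ℝ 1 f) (hconv : ConvexOn ℝ Set.univ f)
    (x₀ : EuclideanSpace ℝ (Fin n)) (hx₀ : gradient f x₀ = 0)
    (hloc : ∃ ε > 0, ContDiffOn ℝ 2 f (Metric.ball x₀ ε) ∧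
      StrictConvexOn ℝ (Metric.ball x₀ ε) f) :
    Filter.Tendsto f (Filter.cocompact (EuclideanSpace ℝ (Fin n))) Filter.atTop := by
  obtain ⟨ε, hε, -, hsc⟩ := hloc
  have hfd : HasFDerivAt f (0 : EuclideanSpace ℝ (Fin n) →L[ℝ] ℝ) x₀ := by
    have hdiff := (hf.differentiable one_ne_zero x₀).hasFDerivAt
    rwa [← toDual_gradient (𝕜 := ℝ), hx₀, map_zero] at hdiff
  have hmin : IsMinOn f univ x₀ := hconv.isMinOn_of_hasFDerivAt_eq_zero (mem_univ _) hfd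
  refine hconv.tendsto_cocompact_atTop_of_forall_sphere_lt (x₀ := x₀) (half_pos hε) fun y hy => ?_
  have hy_ball : y ∈ ball x₀ ε := by
    rw [mem_ball, mem_sphere.mp hy]; linarith
  have hne : y ≠ x₀ := ne_of_mem_sphere hy (half_pos hε).ne'
  exact hsc.lt_of_isMinOn (hmin.on_subset (subset_univ _)) (mem_ball_self hε) hy_ball hne
end
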